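/- For all n ≥ 1, G_{2n+2} = sum_{j=0}^{n} (-1)^{n+j} T(n,j) (j!)^2, where T(n,j) are the central factorial numbers of the second kind and G_{2k} are the Genocchi numbers of the first kind. -/
import Mathlib


/-- Gandhi polynomials: `F 1 = 1`, `F_{n+1}(z) = (z+1)^2 F_n(z+1) - z^2 F_n(z)`. -/
def gandhiF : ℕ → ℚ → ℚ
  | 0, _ => 1
  | 1, _ => 1
  | n + 2, z => (z + 1) ^ 2 * gandhiF (n + 1) (z + 1) - z ^ 2 * gandhiF (n + 1) z

/-- Genocchi numbers of the first kind: `genocchi n = G_{2n} = F_n(0)`. -/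
def genocchi (n : ℕ) : ℚ := gandhiF n 0

/-- Central factorial numbers of the second kind. -/
def centralT : ℕ → ℕ → ℚ
  | 0, 0 => 1
  | 0, _ + 1 => 0
  | _ + 1, 0 => 0
  | n + 1, j + 1 => centralT n j + ((j : ℚ) + 1) ^ 2 * centralT n (j + 1)

/-- Auxiliary weights: `W m j = j! * (m+1)(m+2)⋯(m+j-1)`. -/
def genW (m j : ℕ) : ℚ := (j.factorial : ℚ) * ∏ i ∈ Finset.Ico 1 j, ((m : ℚ) + i)

lemma centralT_succ_zero (n : ℕ) : centralT (n + 1) 0 = 0 := rfl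

lemma centralT_succ_succ (n j : ℕ) :
    centralT (n + 1) (j + 1) = centralT n j + ((j : ℚ) + 1) ^ 2 * centralT n (j + 1) := rfl

lemma centralT_eq_zero_of_lt : ∀ n j : ℕ, n < j → centralT n j = 0 := by
  intro n
  induction n with
  | zero => intro j hj; match j, hj with
      | j + 1, _ => rfl
  | succ n ih =>
      intro j hj
      match j, hj with
      | j + 1, hj =>
          rw [centralT_succ_succ, ih j (by omega), ih (j+1) (by omega)]
          ring

lemma genW_one (j : ℕ) : genW 1 j = (j.factorial : ℚ) ^ 2 := by
  have h : ∏ i ∈ Finset.Ico 1 j, (((1 : ℕ) : ℚ) + i) = (j.factorial : ℚ) := by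
    induction j with
    | zero => simp
    | succ j ih =>
        rcases Nat.eq_zero_or_pos j with rfl | hj
        · simp
        · rw [Finset.prod_Ico_succ_top hj, ih, Nat.factorial_succ]
          push_cast
          ring
  rw [genW, h, sq]

lemma prod_shift (m j : ℕ) (hj : 1 ≤ j) :
    ((m : ℚ) + 1) * ∏ i ∈ Finset.Ico 1 j, ((m : ℚ) + 1 + i) =
      (∏ i ∈ Finset.Ico 1 j, ((m : ℚ) + i)) * ((m : ℚ) + j) := by
  induction j with
  | zero => omega
  | succ j ih =>
      rcases Nat.eq_zero_or_pos j with rfl | hj'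
      · simp
      · rw [Finset.prod_Ico_succ_top hj', Finset.prod_Ico_succ_top hj']
        push_cast
        rw [show ((m:ℚ)+1) * ((∏ i ∈ Finset.Ico 1 j, ((m:ℚ)+1+i)) * ((m:ℚ)+1+j))
            = (((m:ℚ)+1) * ∏ i ∈ Finset.Ico 1 j, ((m:ℚ)+1+i)) * ((m:ℚ)+1+j) by ring,
          ih hj']
        ring

lemma genW_step (m j : ℕ) (hj : 1 ≤ j) :
    genW m (j + 1) = ((m : ℚ) + 1) ^ 2 * genW (m + 1) j
      + ((j : ℚ) ^ 2 - (m : ℚ) ^ 2) * genW m j := by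
  have hm : ((m : ℚ) + 1) ≠ 0 := by positivity
  apply mul_left_cancel₀ hm
  unfold genW
  rw [Finset.prod_Ico_succ_top (a := 1) (b := j) hj]
  have hp := prod_shift m j hj
  have hcast : ∀ i ∈ Finset.Ico 1 j, (((m + 1 : ℕ) : ℚ) + i) = ((m : ℚ) + 1 + i) := by
    intro i _; push_cast; ring
  rw [Finset.prod_congr rfl hcast, Nat.factorial_succ]
  push_cast
  linear_combination (-(((m : ℚ) + 1) ^ 2 * (j.factorial : ℚ))) * hp

lemma gandhi_key : ∀ n : ℕ, 1 ≤ n → ∀ m : ℕ,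
    gandhiF n m = ∑ j ∈ Finset.range (n + 1),
      (-1) ^ (n + j) * centralT n j * genW m j := by
  intro n hn
  induction n, hn using Nat.le_induction with
  | base =>
      intro m
      have h1 : gandhiF 1 (m : ℚ) = 1 := rfl
      rw [h1, Finset.sum_range_succ, Finset.sum_range_succ, Finset.sum_range_zero]
      have h0 : centralT 1 0 = 0 := rfl
      have h11 : centralT 1 1 = 1 := by
        rw [centralT_succ_succ]; norm_num [centralT]
      have hw : genW m 1 = 1 := by simp [genW]
      rw [h0, h11, hw]
      norm_num
  | succ N hn ih =>
      intro m
      obtain ⟨k, rfl⟩ := Nat.exists_eq_add_of_le' hn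
      have hrec : gandhiF (k + 1 + 1) (m : ℚ)
          = ((m : ℚ) + 1) ^ 2 * gandhiF (k + 1) ((m : ℚ) + 1)
            - (m : ℚ) ^ 2 * gandhiF (k + 1) m := by
        show gandhiF (k + 2) (m : ℚ) = _
        rw [gandhiF]
      have hcast : ((m : ℚ) + 1) = ((m + 1 : ℕ) : ℚ) := by push_cast; ring
      rw [hrec, hcast, ih (m + 1), ih m]
      set N := k + 1 with hNdef
      -- RHS of goal: transform
      rw [Finset.sum_range_succ' _ (N + 1)]
      have hzero : (-1) ^ (N + 1 + 0) * centralT (N + 1) 0 * genW m 0 = 0 := by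
        rw [centralT_succ_zero]; ring
      rw [hzero, add_zero]
      have hterm : ∀ j ∈ Finset.range (N + 1),
          (-1) ^ (N + 1 + (j + 1)) * centralT (N + 1) (j + 1) * genW m (j + 1)
          = (-1) ^ (N + j) * centralT N j * genW m (j + 1)
            + (-1) ^ (N + j) * (((j : ℚ) + 1) ^ 2 * centralT N (j + 1)) * genW m (j + 1) := by
        intro j _
        rw [centralT_succ_succ]
        have : (-1 : ℚ) ^ (N + 1 + (j + 1)) = (-1) ^ (N + j) := by
          rw [show N + 1 + (j + 1) = N + j + 2 by ring, pow_add]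
          norm_num
        rw [this]; ring
      rw [Finset.sum_congr rfl hterm, Finset.sum_add_distrib]
      -- second sum: reindex
      have key := Finset.sum_range_succ'
        (fun j => -((-1 : ℚ) ^ (N + j) * ((j : ℚ) ^ 2 * centralT N j) * genW m j)) (N + 1)
      have key2 := Finset.sum_range_succ
        (fun j => -((-1 : ℚ) ^ (N + j) * ((j : ℚ) ^ 2 * centralT N j) * genW m j)) (N + 1)
      have hf0 : -((-1 : ℚ) ^ (N + 0) * (((0 : ℕ) : ℚ) ^ 2 * centralT N 0) * genW m 0) = 0 := by
        push_cast; ring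
      have hfN : -((-1 : ℚ) ^ (N + (N + 1)) * (((N + 1 : ℕ) : ℚ) ^ 2 * centralT N (N + 1))
          * genW m (N + 1)) = 0 := by
        rw [centralT_eq_zero_of_lt N (N + 1) (by omega)]; ring
      rw [hf0, add_zero] at key
      rw [hfN, add_zero] at key2
      have hB : (∑ j ∈ Finset.range (N + 1),
            (-1) ^ (N + j) * (((j : ℚ) + 1) ^ 2 * centralT N (j + 1)) * genW m (j + 1))
          = ∑ j ∈ Finset.range (N + 1),
            -((-1 : ℚ) ^ (N + j) * ((j : ℚ) ^ 2 * centralT N j) * genW m j) := by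
        rw [← key2, key]
        apply Finset.sum_congr rfl
        intro j _
        have hs : (-1 : ℚ) ^ (N + (j + 1)) = (-1) ^ (N + j) * (-1) := by
          rw [show N + (j + 1) = N + j + 1 by ring, pow_succ]
        rw [hs]
        push_cast
        ring
      rw [hB]
      rw [← Finset.sum_add_distrib, Finset.mul_sum, Finset.mul_sum, ← Finset.sum_sub_distrib]
      apply Finset.sum_congr rfl
      intro j hj
      rcases Nat.eq_zero_or_pos j with rfl | hjpos
      · have h0 : centralT N 0 = 0 := centralT_succ_zero k
        rw [h0]
        push_cast
        ring
      · rw [genW_step m j hjpos]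
        push_cast
        ring

theorem genocchi_central_factorial (n : ℕ) (hn : 1 ≤ n) :
    genocchi (n + 1) =
      ∑ j ∈ Finset.range (n + 1),
        (-1) ^ (n + j) * centralT n j * (j.factorial : ℚ) ^ 2 := by
  obtain ⟨k, rfl⟩ := Nat.exists_eq_add_of_le' hn
  have h1 : genocchi (k + 1 + 1) = gandhiF (k + 1) 1 := by
    show gandhiF (k + 2) 0 = _
    rw [gandhiF]
    norm_num
  have hk := gandhi_key (k + 1) (by omega) 1
  rw [Nat.cast_one] at hk
  rw [h1, hk]
  apply Finset.sum_congr rfl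
  intro j _
  rw [genW_one]
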